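/- Let Λ be a quantum channel (TP-CP map) on a d-dimensional system H_code, ρ_mix the completely mixed state, |Φ⟩ the maximally entangled state of H_code with a reference system R, P₁ := Σ_x |x,x⟩_b⟨x,x| and P₂ := Σ_z |z,z̄⟩_p⟨z,z̄| the bit and phase diagonal projections. Then 1 − ⟨Φ| Λ⊗ι_R(|Φ⟩⟨Φ|) |Φ⟩ ≤ Tr[Λ⊗ι_R(|Φ⟩⟨Φ|)(I − P₁)] + Tr[Λ⊗ι_R(|Φ⟩⟨Φ|)(I − P₂)]. -/

import Mathlib

open scoped BigOperators Matrix Kronecker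
open Classical

/-- The trace bilinear pairing `(x, z) := Σᵢ tr(xᵢ zᵢ)` on `F_q^m`, valued in `{0,…,s-1}`. -/
noncomputable def pairTr (s : ℕ) (F : Type) [Field F] [Fintype F] [Algebra (ZMod s) F]
    (m : ℕ) (x z : Fin m → F) : ℕ :=
  (∑ i, Algebra.trace (ZMod s) F (x i * z i)).val

/-- The bit basis state `|x,x⟩_b` on the doubled system. -/
noncomputable def bitPairVec (F : Type) [Field F] [Fintype F] (m : ℕ) (x : Fin m → F) :
    ((Fin m → F) × (Fin m → F)) → ℂ :=
  fun p => if p = (x, x) then 1 else 0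

/-- The phase basis state `|z, z̄⟩_p` on the doubled system. -/
noncomputable def phasePairVec (s : ℕ) (F : Type) [Field F] [Fintype F]
    [Algebra (ZMod s) F] (m : ℕ) (z : Fin m → F) :
    ((Fin m → F) × (Fin m → F)) → ℂ :=
  fun p => (1 / ((Fintype.card F : ℂ) ^ m)) *
    Complex.exp (-(2 * Real.pi * Complex.I / s) * (pairTr s F m p.1 z : ℕ)) *
    Complex.exp ((2 * Real.pi * Complex.I / s) * (pairTr s F m p.2 z : ℕ))

/-- `P₁ = Σ_x |x,x⟩_b⟨x,x|_b`. -/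
noncomputable def P₁ (F : Type) [Field F] [Fintype F] (m : ℕ) :
    Matrix ((Fin m → F) × (Fin m → F)) ((Fin m → F) × (Fin m → F)) ℂ :=
  ∑ x : Fin m → F, Matrix.vecMulVec (bitPairVec F m x) (star (bitPairVec F m x))

/-- `P₂ = Σ_z |z,z̄⟩_p⟨z,z̄|_p`. -/
noncomputable def P₂ (s : ℕ) (F : Type) [Field F] [Fintype F] [Algebra (ZMod s) F] (m : ℕ) :
    Matrix ((Fin m → F) × (Fin m → F)) ((Fin m → F) × (Fin m → F)) ℂ :=
  ∑ z : Fin m → F,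
    Matrix.vecMulVec (phasePairVec s F m z) (star (phasePairVec s F m z))

/-- The maximally entangled state `|Φ⟩ = (1/√(q^m)) Σ_i |i,i⟩_b`. -/
noncomputable def maxEnt (F : Type) [Field F] [Fintype F] (m : ℕ) :
    ((Fin m → F) × (Fin m → F)) → ℂ :=
  fun p => if p.1 = p.2 then ((1 / Real.sqrt ((Fintype.card F : ℝ) ^ m) : ℝ) : ℂ) else 0

/-! Both `P₁` and `P₂` are orthogonal projections: the bit vectors `|x,x⟩` are orthonormal, and so
are the phase vectors `|z,z̄⟩`, by orthogonality of the characters `y ↦ ψ (c ⬝ᵥ y)` of `F_q^m`,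
where `ψ = exp (2πi tr(·) / s)`. Every bit vector has overlap `q^{-m}` with every phase vector,
and both families sum to `√(q^m) |Φ⟩`; hence `P₁ P₂ = |Φ⟩⟨Φ|`, which is self-adjoint, so `P₁` and
`P₂` commute. For commuting projections `(I - P₁) + (I - P₂) - (I - P₁P₂) = (I - P₁)(I - P₂) ≥ 0`,
and testing this operator inequality against `σ`, which has trace one because the channel is trace
preserving, gives the claim since `tr (σ (I - |Φ⟩⟨Φ|)) = 1 - ⟨Φ|σ|Φ⟩`. -/

open Matrix
open scoped ComplexOrder MatrixOrder

theorem IsStarProjection.one_sub_mul_le_add {R : Type*} [Ring R] [PartialOrder R] [StarRing R]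
    [StarOrderedRing R] {p q : R} (hp : IsStarProjection p) (hq : IsStarProjection q)
    (hpq : Commute p q) : 1 - p * q ≤ (1 - p) + (1 - q) := by
  have hcomm : Commute (1 - p) (1 - q) :=
    (Commute.one_right _).sub_right ((Commute.one_left q).sub_left hpq)
  have hsplit : (1 - p) + (1 - q) - (1 - p * q) = (1 - p) * (1 - q) := by noncomm_ring
  exact sub_nonneg.mp (hsplit ▸ (hp.one_sub.mul hq.one_sub hcomm).nonneg)

namespace Matrix

variable {n 𝕜 : Type*} [Fintype n] [RCLike 𝕜]

theorem PosSemidef.trace_mul_mono {σ A B : Matrix n n 𝕜} (hσ : σ.PosSemidef) (hAB : A ≤ B) :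
    (σ * A).trace ≤ (σ * B).trace := by
  obtain ⟨C, hC⟩ := CStarAlgebra.nonneg_iff_eq_star_mul_self.mp (sub_nonneg.mpr hAB)
  have hcycle : (σ * (B - A)).trace = (C * σ * Cᴴ).trace := by
    rw [hC, star_eq_conjTranspose, ← Matrix.mul_assoc, trace_mul_cycle]
  rw [← sub_nonneg, ← trace_sub, ← Matrix.mul_sub, hcycle]
  exact (hσ.mul_mul_conjTranspose_same C).trace_nonneg

theorem trace_mul_vecMulVec (M : Matrix n n 𝕜) (v w : n → 𝕜) :
    (M * vecMulVec v w).trace = w ⬝ᵥ M *ᵥ v := by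
  rw [mul_vecMulVec, trace_vecMulVec, dotProduct_comm]

theorem isStarProjection_sum_vecMulVec {ι : Type*} [Fintype ι] [DecidableEq ι] {v : ι → n → 𝕜}
    (hv : ∀ i j, star (v i) ⬝ᵥ v j = if i = j then 1 else 0) :
    IsStarProjection (∑ i, vecMulVec (v i) (star (v i))) := by
  refine isStarProjection_iff'.mpr ⟨?_, ?_⟩
  · simp [Finset.sum_mul_sum, vecMulVec_mul_vecMulVec, hv, apply_ite (vecMulVec _)]
  · simp [star_eq_conjTranspose]

theorem sum_vecMulVec_mul_sum_vecMulVec {ι ι' : Type*} [Fintype ι] [Fintype ι']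
    {u : ι → n → 𝕜} {v : ι' → n → 𝕜} {c : 𝕜} (huv : ∀ i j, star (u i) ⬝ᵥ v j = c) :
    (∑ i, vecMulVec (u i) (star (u i))) * ∑ j, vecMulVec (v j) (star (v j)) =
      c • vecMulVec (∑ i, u i) (star (∑ j, v j)) := by
  ext a b
  simp [vecMulVec_mul_vecMulVec, huv, sum_apply, vecMulVec_apply, Finset.sum_mul,
    Finset.mul_sum, star_sum]

theorem trace_sum_kronecker_one_mul_mul_conjTranspose {κ n' : Type*} [Fintype κ] [Fintype n']
    [DecidableEq n] [DecidableEq n'] {K : κ → Matrix n n 𝕜} (hK : ∑ k, (K k)ᴴ * K k = 1)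
    (ρ : Matrix (n × n') (n × n') 𝕜) :
    (∑ k, (K k ⊗ₖ (1 : Matrix n' n' 𝕜)) * ρ * (K k ⊗ₖ (1 : Matrix n' n' 𝕜))ᴴ).trace =
      ρ.trace := by
  have hunital : ∑ k, (K k ⊗ₖ (1 : Matrix n' n' 𝕜))ᴴ * (K k ⊗ₖ 1) = 1 := by
    simp_rw [conjTranspose_kronecker, conjTranspose_one, ← mul_kronecker_mul, Matrix.one_mul]
    calc ∑ k, ((K k)ᴴ * K k) ⊗ₖ (1 : Matrix n' n' 𝕜) = (∑ k, (K k)ᴴ * K k) ⊗ₖ 1 := by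
          ext; simp [sum_apply, Finset.sum_mul]
      _ = 1 := by rw [hK, one_kronecker_one]
  rw [trace_sum]
  simp_rw [trace_mul_cycle _ ρ, ← trace_sum, ← Finset.sum_mul, hunital, Matrix.one_mul]

end Matrix

theorem AddChar.sum_apply_dotProduct {R ι : Type*} [CommRing R] [Fintype R] [Fintype ι]
    [DecidableEq ι]     {ψ : AddChar R ℂ} (hψ : ψ.IsPrimitive) (c : ι → R) :
    ∑ z, ψ (c ⬝ᵥ z) = if c = 0 then (Fintype.card (ι → R) : ℂ) else 0 := by
  split_ifs with hc
  · simp [hc]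
  obtain ⟨i, hi⟩ := Function.ne_iff.mp hc
  obtain ⟨b, hb⟩ := AddChar.ne_one_iff.mp (hψ hi)
  let χ : AddChar (ι → R) ℂ :=
    ψ.compAddMonoidHom (AddMonoidHom.mk' (c ⬝ᵥ ·) (dotProduct_add c))
  refine AddChar.sum_eq_zero_of_ne_one (ψ := χ) (AddChar.ne_one_iff.mpr ⟨Pi.single i b, ?_⟩)
  simpa [χ, dotProduct_single] using hb

section PairVectors

variable (s : ℕ) [Fact s.Prime] (F : Type) [Field F] [Fintype F] [Algebra (ZMod s) F] (m : ℕ)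

noncomputable def traceChar : AddChar F ℂ :=
  ZMod.stdAddChar.compAddMonoidHom (Algebra.trace (ZMod s) F).toAddMonoidHom

theorem isPrimitive_traceChar : (traceChar s F).IsPrimitive := by
  refine AddChar.IsPrimitive.of_ne_one (AddChar.ne_one_iff.mpr ?_)
  obtain ⟨a, ha⟩ : ∃ a, Algebra.trace (ZMod s) F a ≠ 0 := by
    by_contra! h
    exact Algebra.trace_ne_zero (ZMod s) F (LinearMap.ext h)
  refine ⟨a, fun h => ha (ZMod.injective_stdAddChar ?_)⟩
  simpa [traceChar] using h

theorem exp_mul_pairTr (x z : Fin m → F) :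
    Complex.exp (2 * Real.pi * Complex.I / s * (pairTr s F m x z : ℕ)) =
      traceChar s F (x ⬝ᵥ z) := by
  rw [traceChar, AddChar.compAddMonoidHom_apply, ZMod.stdAddChar_apply, ZMod.toCircle_apply,
    pairTr, dotProduct, LinearMap.toAddMonoidHom_coe, map_sum]
  ring_nf

theorem phasePairVec_apply (z : Fin m → F) (p : (Fin m → F) × (Fin m → F)) :
    phasePairVec s F m z p =
      ((Fintype.card F : ℂ) ^ m)⁻¹ * traceChar s F ((p.2 - p.1) ⬝ᵥ z) := by
  rw [phasePairVec, neg_mul, Complex.exp_neg, exp_mul_pairTr, exp_mul_pairTr, sub_dotProduct,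
    AddChar.map_sub_eq_div]
  ring

theorem bitPairVec_eq_single (x : Fin m → F) : bitPairVec F m x = Pi.single (x, x) 1 := by
  funext p
  simp [bitPairVec, Pi.single_apply]

theorem star_bitPairVec_dotProduct (x : Fin m → F) (v : (Fin m → F) × (Fin m → F) → ℂ) :
    star (bitPairVec F m x) ⬝ᵥ v = v (x, x) := by
  simp [bitPairVec_eq_single]

theorem star_bitPairVec_dotProduct_bitPairVec (x y : Fin m → F) :
    star (bitPairVec F m x) ⬝ᵥ bitPairVec F m y = if x = y then 1 else 0 := by
  simp [star_bitPairVec_dotProduct, bitPairVec]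

theorem star_bitPairVec_dotProduct_phasePairVec (x z : Fin m → F) :
    star (bitPairVec F m x) ⬝ᵥ phasePairVec s F m z = ((Fintype.card F : ℂ) ^ m)⁻¹ := by
  simp [star_bitPairVec_dotProduct, phasePairVec_apply]

theorem sum_bitPairVec_apply (p : (Fin m → F) × (Fin m → F)) :
    (∑ x, bitPairVec F m x) p = if p.1 = p.2 then 1 else 0 := by
  obtain ⟨a, b⟩ := p
  simp only [Finset.sum_apply, bitPairVec, Prod.mk.injEq]
  split_ifs with h
  · simp [h]
  · exact Finset.sum_eq_zero fun x _ => if_neg fun hx => h (hx.1.trans hx.2.symm)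

theorem sum_phasePairVec : ∑ z, phasePairVec s F m z = ∑ x, bitPairVec F m x := by
  funext p
  simp only [Finset.sum_apply, phasePairVec_apply, ← Finset.mul_sum]
  rw [AddChar.sum_apply_dotProduct (isPrimitive_traceChar s F), ← Finset.sum_apply,
    sum_bitPairVec_apply]
  simp only [sub_eq_zero, eq_comm (a := p.2)]
  split_ifs <;> simp

theorem star_phasePairVec_dotProduct_phasePairVec (z w : Fin m → F) :
    star (phasePairVec s F m z) ⬝ᵥ phasePairVec s F m w = if z = w then 1 else 0 := by
  set N : ℂ := (Fintype.card F : ℂ) ^ m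
  calc star (phasePairVec s F m z) ⬝ᵥ phasePairVec s F m w
      = ∑ p : (Fin m → F) × (Fin m → F),
          N⁻¹ ^ 2 * traceChar s F ((p.2 - p.1) ⬝ᵥ (w - z)) := by
        refine Finset.sum_congr rfl fun p _ => ?_
        rw [Pi.star_apply, phasePairVec_apply, phasePairVec_apply, dotProduct_sub,
          AddChar.map_sub_eq_div, div_eq_mul_inv, AddChar.inv_apply_eq_conj]
        simp [N]
        ring
    _ = N⁻¹ ^ 2 * (N * ∑ c, traceChar s F ((w - z) ⬝ᵥ c)) := by
        have hshift (a : Fin m → F) : ∑ b, traceChar s F ((b - a) ⬝ᵥ (w - z)) =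
            ∑ c, traceChar s F ((w - z) ⬝ᵥ c) := by
          simpa [dotProduct_comm] using
            (Equiv.subRight a).sum_comp fun c => traceChar s F (c ⬝ᵥ (w - z))
        rw [← Finset.mul_sum, Fintype.sum_prod_type, Finset.sum_congr rfl fun a _ => hshift a]
        simp [N]
    _ = if z = w then 1 else 0 := by
        simp only [AddChar.sum_apply_dotProduct (isPrimitive_traceChar s F), sub_eq_zero,
          eq_comm (a := w)]
        split_ifs
        · simp [N]
          field_simp
        · simp

theorem isStarProjection_P₁ : IsStarProjection (P₁ F m) :=
  isStarProjection_sum_vecMulVec (star_bitPairVec_dotProduct_bitPairVec F m)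

theorem isStarProjection_P₂ : IsStarProjection (P₂ s F m) :=
  isStarProjection_sum_vecMulVec (star_phasePairVec_dotProduct_phasePairVec s F m)

theorem maxEnt_eq_smul_sum_bitPairVec :
    maxEnt F m =
      ((1 / Real.sqrt ((Fintype.card F : ℝ) ^ m) : ℝ) : ℂ) • ∑ x, bitPairVec F m x := by
  funext p
  rw [Pi.smul_apply, sum_bitPairVec_apply]
  simp [maxEnt]

theorem star_inv_sqrt_card_pow_mul_self :
    star ((1 / Real.sqrt ((Fintype.card F : ℝ) ^ m) : ℝ) : ℂ) *
      ((1 / Real.sqrt ((Fintype.card F : ℝ) ^ m) : ℝ) : ℂ) = ((Fintype.card F : ℂ) ^ m)⁻¹ := by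
  rw [Complex.star_def, Complex.conj_ofReal, ← Complex.ofReal_mul, div_mul_div_comm, one_mul,
    Real.mul_self_sqrt (by positivity)]
  push_cast
  simp

theorem star_maxEnt_dotProduct_maxEnt : star (maxEnt F m) ⬝ᵥ maxEnt F m = 1 := by
  rw [maxEnt_eq_smul_sum_bitPairVec, star_smul, smul_dotProduct, dotProduct_smul, star_sum,
    sum_dotProduct, smul_smul, star_inv_sqrt_card_pow_mul_self]
  simp [dotProduct_sum, star_bitPairVec_dotProduct_bitPairVec]

theorem P₁_mul_P₂ : P₁ F m * P₂ s F m = vecMulVec (maxEnt F m) (star (maxEnt F m)) := by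
  rw [P₁, P₂, sum_vecMulVec_mul_sum_vecMulVec (star_bitPairVec_dotProduct_phasePairVec s F m),
    sum_phasePairVec, maxEnt_eq_smul_sum_bitPairVec, star_smul, vecMulVec_smul, smul_vecMulVec,
    smul_smul, star_inv_sqrt_card_pow_mul_self]

end PairVectors

theorem stmt9_general (s : ℕ) [Fact (Nat.Prime s)] (F : Type) [Field F] [Fintype F]
    [Algebra (ZMod s) F] (m : ℕ)
    (κ : Type) [Fintype κ] (K : κ → Matrix (Fin m → F) (Fin m → F) ℂ)
    (hK : ∑ k, (K k)ᴴ * K k = 1) :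
    let σ := ∑ k, (K k ⊗ₖ (1 : Matrix (Fin m → F) (Fin m → F) ℂ)) *
        Matrix.vecMulVec (maxEnt F m) (star (maxEnt F m)) *
        (K k ⊗ₖ (1 : Matrix (Fin m → F) (Fin m → F) ℂ))ᴴ
    (1 - star (maxEnt F m) ⬝ᵥ (σ *ᵥ maxEnt F m)).re ≤
      ((σ * (1 - P₁ F m)).trace).re + ((σ * (1 - P₂ s F m)).trace).re := by
  intro σ
  have hP₁ := isStarProjection_P₁ F m
  have hP₂ := isStarProjection_P₂ s F m
  have hcomm : Commute (P₁ F m) (P₂ s F m) := by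
    rw [IsSelfAdjoint.commute_iff hP₁.isSelfAdjoint hP₂.isSelfAdjoint, P₁_mul_P₂]
    exact (posSemidef_vecMulVec_self_star _).isHermitian
  have hσ : σ.PosSemidef := posSemidef_sum _ fun k _ =>
    (posSemidef_vecMulVec_self_star _).mul_mul_conjTranspose_same _
  have htrace : σ.trace = 1 := by
    rw [trace_sum_kronecker_one_mul_mul_conjTranspose hK, trace_vecMulVec, dotProduct_comm,
      star_maxEnt_dotProduct_maxEnt]
  have hfidelity : (σ * (1 - P₁ F m * P₂ s F m)).trace =
      1 - star (maxEnt F m) ⬝ᵥ (σ *ᵥ maxEnt F m) := by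
    rw [P₁_mul_P₂, Matrix.mul_sub, Matrix.mul_one, trace_sub, htrace, trace_mul_vecMulVec]
  rw [← hfidelity, ← Complex.add_re, ← trace_add, ← Matrix.mul_add]
  exact Complex.re_le_re (hσ.trace_mul_mono (hP₁.one_sub_mul_le_add hP₂ hcomm))

/-- for a quantum channel `Λ` on `H_code` given by Kraus operators `K_k`
(`Σ_k K_k† K_k = 1`), with `σ := (Λ ⊗ ι_R)(|Φ⟩⟨Φ|) = Σ_k (K_k ⊗ 1)|Φ⟩⟨Φ|(K_k ⊗ 1)†`,
one has `1 − ⟨Φ|σ|Φ⟩ ≤ Tr[σ(I − P₁)] + Tr[σ(I − P₂)]`. -/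
theorem stmt9 (s : ℕ) [Fact (Nat.Prime s)] (F : Type) [Field F] [Fintype F]
    [Algebra (ZMod s) F] (hcard : ∃ t : ℕ, 0 < t ∧ Fintype.card F = s ^ t) (m : ℕ)
    (κ : Type) [Fintype κ] (K : κ → Matrix (Fin m → F) (Fin m → F) ℂ)
    (hK : ∑ k, (K k)ᴴ * K k = 1) :
    let σ := ∑ k, (K k ⊗ₖ (1 : Matrix (Fin m → F) (Fin m → F) ℂ)) *
        Matrix.vecMulVec (maxEnt F m) (star (maxEnt F m)) *
        (K k ⊗ₖ (1 : Matrix (Fin m → F) (Fin m → F) ℂ))ᴴ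
    (1 - star (maxEnt F m) ⬝ᵥ (σ *ᵥ maxEnt F m)).re ≤
      ((σ * (1 - P₁ F m)).trace).re + ((σ * (1 - P₂ s F m)).trace).re :=
  stmt9_general s F m κ K hK
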